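/- arXiv:2112.00615 — 3 statements merged into one kernel-verified Lean document; each statement's English description precedes it below -/
import Mathlib

section
/- For every finite set F ⊂ ℕ, the set A ∪ F still has additive order 3, where A = {0,...,10} ∪ ⋃_{n≥2} {2·10^(n-1)+2, ..., 10^n}. That is, A is a finitely stable additive basis. -/
/-- The set `A = {0,...,10} ∪ ⋃_{n≥2} {2·10^(n-1)+2, ..., 10^n}`. -/
def A : Set ℕ := Set.Iic 10 ∪ ⋃ n ∈ Set.Ici 2, Set.Icc (2 * 10 ^ (n - 1) + 2) (10 ^ n)

lemma mem_A_small {x : ℕ} (h : x ≤ 10) : x ∈ A := Or.inl h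

lemma mem_A_big {x n : ℕ} (hn : 2 ≤ n) (h1 : 2 * 10 ^ (n - 1) + 2 ≤ x)
    (h2 : x ≤ 10 ^ n) : x ∈ A := by
  right
  simp only [Set.mem_iUnion, Set.mem_Icc, Set.mem_Ici]
  exact ⟨n, hn, h1, h2⟩

lemma not_mem_A_gap {x n : ℕ} (hn : 1 ≤ n) (h1 : 10 ^ n < x)
    (h2 : x ≤ 2 * 10 ^ n + 1) : x ∉ A := by
  intro hx
  have h10 : 10 ≤ 10 ^ n := by
    calc 10 = 10 ^ 1 := (pow_one 10).symm
    _ ≤ 10 ^ n := Nat.pow_le_pow_right (by norm_num) hn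
  rcases hx with h | h
  · simp only [Set.mem_Iic] at h; omega
  · simp only [Set.mem_iUnion, Set.mem_Icc, Set.mem_Ici] at h
    obtain ⟨m, hm, hm1, hm2⟩ := h
    by_cases hmn : m ≤ n
    · have : 10 ^ m ≤ 10 ^ n := Nat.pow_le_pow_right (by norm_num) hmn
      omega
    · have : 10 ^ n ≤ 10 ^ (m - 1) := Nat.pow_le_pow_right (by norm_num) (by omega)
      omega

lemma three_sum (N : ℕ) : ∃ a b c : ℕ, a ∈ A ∧ b ∈ A ∧ c ∈ A ∧ a + b + c = N := by
  by_cases hsmall : N ≤ 30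
  · refine ⟨min N 10, min (N - min N 10) 10, N - min N 10 - min (N - min N 10) 10,
      mem_A_small (by omega), mem_A_small (by omega), mem_A_small (by omega), by omega⟩
  · push_neg at hsmall
    have hex : ∃ n, N ≤ 2 * 10 ^ n + 1 :=
      ⟨N, by have := Nat.lt_pow_self (n := N) (by norm_num : 1 < 10); omega⟩
    set n := Nat.find hex with hn_def
    have hub : N ≤ 2 * 10 ^ n + 1 := Nat.find_spec hex
    have hn2 : 2 ≤ n := by
      by_contra hcon
      interval_cases n <;> omega
    have hlb : ¬ (N ≤ 2 * 10 ^ (n - 1) + 1) := Nat.find_min hex (by omega)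
    push_neg at hlb
    have hP : 10 ^ n = 10 * 10 ^ (n - 1) := by
      conv_lhs => rw [show n = n - 1 + 1 by omega]
      rw [pow_succ]; ring
    have hP10 : 10 ≤ 10 ^ (n - 1) := by
      calc 10 = 10 ^ 1 := (pow_one 10).symm
      _ ≤ 10 ^ (n - 1) := Nat.pow_le_pow_right (by norm_num) (by omega)
    by_cases h1 : N ≤ 10 ^ n
    · exact ⟨N, 0, 0, mem_A_big hn2 (by omega) h1, mem_A_small (by omega),
        mem_A_small (by omega), by omega⟩
    push_neg at h1
    by_cases h2 : N ≤ 10 ^ n + 20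
    · exact ⟨10 ^ n, min (N - 10 ^ n) 10, N - 10 ^ n - min (N - 10 ^ n) 10,
        mem_A_big hn2 (by omega) (le_refl _), mem_A_small (by omega),
        mem_A_small (by omega), by omega⟩
    push_neg at h2
    by_cases h3 : N ≤ 2 * 10 ^ n
    · by_cases h4 : 2 * 10 ^ (n - 1) + 2 ≤ N - 10 ^ n
      · exact ⟨N - 10 ^ n, 10 ^ n, 0, mem_A_big hn2 h4 (by omega),
          mem_A_big hn2 (by omega) (le_refl _), mem_A_small (by omega), by omega⟩
      · push_neg at h4
        exact ⟨2 * 10 ^ (n - 1) + 2, N - (2 * 10 ^ (n - 1) + 2), 0,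
          mem_A_big hn2 (le_refl _) (by omega),
          mem_A_big hn2 (by omega) (by omega), mem_A_small (by omega), by omega⟩
    · -- N = 2 * 10 ^ n + 1
      exact ⟨10 ^ n, 10 ^ n, 1, mem_A_big hn2 (by omega) (le_refl _),
        mem_A_big hn2 (by omega) (le_refl _), mem_A_small (by omega), by omega⟩

theorem stmt_3 : ∀ F : Finset ℕ,
    (∀ N : ℕ, ∃ a b c : ℕ, a ∈ A ∪ ↑F ∧ b ∈ A ∪ ↑F ∧ c ∈ A ∪ ↑F ∧ a + b + c = N) ∧
    ¬ (∀ N : ℕ, ∃ a b : ℕ, a ∈ A ∪ ↑F ∧ b ∈ A ∪ ↑F ∧ a + b = N) := by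
  intro F
  constructor
  · intro N
    obtain ⟨a, b, c, ha, hb, hc, habc⟩ := three_sum N
    exact ⟨a, b, c, Or.inl ha, Or.inl hb, Or.inl hc, habc⟩
  · intro h
    set M := F.sup id with hM
    have hMf : ∀ f ∈ F, f ≤ M := fun f hf => Finset.le_sup (f := id) hf
    set n := M + 1 with hn_def
    have hn1 : 1 ≤ n := by omega
    have hQ : M < 10 ^ n := by
      have := Nat.lt_pow_self (n := n) (by norm_num : 1 < 10)
      omega
    obtain ⟨a, b, ha, hb, hab⟩ := h (2 * 10 ^ n + 1)
    have key : ∀ x, x ∈ A ∪ (↑F : Set ℕ) → x ≤ 2 * 10 ^ n + 1 →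
        x ≤ 10 ^ n ∨ x ∈ F := by
      intro x hx hx2
      rcases hx with hx | hx
      · left
        by_contra hcon
        exact not_mem_A_gap hn1 (by omega) hx2 hx
      · right; exact hx
    rcases key a ha (by omega) with hA | hF
    · rcases key b hb (by omega) with hA' | hF'
      · -- a, b ≤ 10^n, but a + b = 2*10^n + 1
        omega
      · -- b ∈ F, so b ≤ M, a = 2*10^n+1-b > 10^n : a not in A, so a ∈ F
        have hbM : b ≤ M := hMf b hF'
        rcases ha with ha | ha
        · exact not_mem_A_gap hn1 (by omega) (by omega) ha
        · have : a ≤ M := hMf a ha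
          omega
    · have haM : a ≤ M := hMf a hF
      rcases hb with hb | hb
      · exact not_mem_A_gap hn1 (by omega) (by omega) hb
      · have : b ≤ M := hMf b hb
        omega
end

section
/- Every natural number N ≥ 0 is a sum of three elements of A = {0,...,10} ∪ ⋃_{n≥2} {2·10^(n-1)+2, ..., 10^n}; in particular every N with 10^n < N ≤ 10^(n+1) can be decomposed using at most one small correction element from {0,...,10} together with elements of the intervals A_k. -/
lemma small_memA {a : ℕ} (h : a ≤ 10) : a ∈ A := Or.inl h

lemma big_memA {a n : ℕ} (h2 : 2 ≤ n) (h : 2 * 10 ^ (n - 1) + 2 ≤ a) (h' : a ≤ 10 ^ n) :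
    a ∈ A := by
  right
  exact Set.mem_biUnion h2 ⟨h, h'⟩

lemma keyA : ∀ n N : ℕ, N ≤ 2 * 10 ^ (n + 2) + 10 →
    ∃ a b c : ℕ, a ∈ A ∧ b ∈ A ∧ c ∈ A ∧ a + b + c = N := by
  intro n
  induction n with
  | zero =>
    intro N hN
    norm_num at hN
    by_cases h30 : N ≤ 30
    · exact ⟨min N 10, min (N - min N 10) 10, N - min N 10 - min (N - min N 10) 10,
        small_memA (by omega), small_memA (by omega), small_memA (by omega), by omega⟩
    by_cases h120 : N ≤ 120
    · refine ⟨min N 100, min (N - min N 100) 10, N - min N 100 - min (N - min N 100) 10,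
        big_memA (n := 2) le_rfl (by norm_num; try omega) (by norm_num; try omega),
        small_memA (by omega), small_memA (by omega), by omega⟩
    · refine ⟨max 22 (N - 110), min (N - max 22 (N - 110)) 100,
        N - max 22 (N - 110) - min (N - max 22 (N - 110)) 100,
        big_memA (n := 2) le_rfl (by norm_num; try omega) (by norm_num; try omega),
        big_memA (n := 2) le_rfl (by norm_num; try omega) (by norm_num; try omega),
        small_memA (by omega), by omega⟩
  | succ n ih =>
    intro N hN
    by_cases h0 : N ≤ 2 * 10 ^ (n + 2) + 10
    · exact ih N h0
    have hp : (100 : ℕ) ≤ 10 ^ (n + 2) := by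
      calc (100 : ℕ) = 10 ^ 2 := by norm_num
      _ ≤ 10 ^ (n + 2) := Nat.pow_le_pow_right (by norm_num) (by omega)
    set p := 10 ^ (n + 2) with hpdef
    have hpow : 10 ^ (n + 3) = 10 * p := by
      rw [hpdef, ← pow_succ']
    have hpow2 : (10 : ℕ) ^ (n + 1 + 2) = 10 * p := by
      rw [show n + 1 + 2 = n + 3 from rfl, hpow]
    rw [hpow2] at hN
    have hsub : n + 3 - 1 = n + 2 := rfl
    by_cases h1 : N ≤ 10 * p + 20
    · refine ⟨min N (10 * p), min (N - min N (10 * p)) 10,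
        N - min N (10 * p) - min (N - min N (10 * p)) 10,
        big_memA (n := n + 3) (by omega) (by rw [hsub, ← hpdef]; omega)
          (by rw [hpow]; omega),
        small_memA (by omega), small_memA (by omega), by omega⟩
    · refine ⟨max (2 * p + 2) (N - 10 - 10 * p),
        min (N - max (2 * p + 2) (N - 10 - 10 * p)) (10 * p),
        N - max (2 * p + 2) (N - 10 - 10 * p)
          - min (N - max (2 * p + 2) (N - 10 - 10 * p)) (10 * p),
        big_memA (n := n + 3) (by omega) (by rw [hsub, ← hpdef]; omega)
          (by rw [hpow]; omega),
        big_memA (n := n + 3) (by omega) (by rw [hsub, ← hpdef]; omega)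
          (by rw [hpow]; omega),
        small_memA (by omega), by omega⟩

theorem stmt_12 : ∀ N : ℕ, ∃ a b c : ℕ, a ∈ A ∧ b ∈ A ∧ c ∈ A ∧ a + b + c = N := by
  intro N
  apply keyA N N
  have : N < 10 ^ N := Nat.lt_pow_self (by norm_num)
  have h2 : 10 ^ N ≤ 10 ^ (N + 2) := Nat.pow_le_pow_right (by norm_num) (by omega)
  omega
end

section
/- For n ≥ 2 and any x, y ∈ A with x, y ≤ 2·10^n + 1, where A = {0,...,10} ∪ ⋃_{m≥2} {2·10^(m-1)+2, ..., 10^m}, if x + y = 2·10^n + 1 then a contradiction follows; equivalently, the gap structure of A (each A_m ends at 10^m and the next begins at 2·10^m + 2) forces x + y ≠ 2·10^n + 1. -/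
lemma key : ∀ n : ℕ, 2 ≤ n → ∀ z : ℕ, z ∈ A → z ≤ 2 * 10 ^ n + 1 → z ≤ 10 ^ n := by
  intro n hn z hz hle
  have h10 : (10:ℕ) ≤ 10 ^ n := by
    calc (10:ℕ) = 10 ^ 1 := (pow_one 10).symm
    _ ≤ 10 ^ n := Nat.pow_le_pow_right (by norm_num) (by omega)
  rcases hz with h | h
  · exact le_trans h h10
  · simp only [Set.mem_iUnion, Set.mem_Ici, Set.mem_Icc] at h
    obtain ⟨m, hm, hlo, hhi⟩ := h
    by_cases hmn : m ≤ n
    · exact le_trans hhi (Nat.pow_le_pow_right (by norm_num) hmn)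
    · exfalso
      have hm1 : n ≤ m - 1 := by omega
      have : (2 * 10 ^ n + 2 : ℕ) ≤ 2 * 10 ^ (m - 1) + 2 := by
        have := Nat.pow_le_pow_right (show 1 ≤ 10 by norm_num) hm1
        omega
      omega

theorem stmt_19 : ∀ n : ℕ, 2 ≤ n → ∀ x y : ℕ, x ∈ A → y ∈ A →
    x ≤ 2 * 10 ^ n + 1 → y ≤ 2 * 10 ^ n + 1 → x + y ≠ 2 * 10 ^ n + 1 := by
  intro n hn x y hx hy hxle hyle
  have h1 := key n hn x hx hxle
  have h2 := key n hn y hy hyle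
  omega
end
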